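/- Let L be a connected graded and locally finite dimensional pre-Lie algebra, with enveloping Hopf algebra (κ[L], *, Δ) and graded dual Hopf algebra (κ[L*], ·, δ). Then for all α, β ∈ L and w ∈ L*, one has ⟨α ◁ β | w⟩ = ⟨α ⊗ β | δ_irr(w)⟩ = ⟨α̂ ⊗ β̂ | δ̄(w)⟩, where δ_irr = δ₁ is the degree-one component of the dual of the brace product, δ̄(x) = δ(x) − 1⊗x − x⊗1 is the reduced coproduct on κ[L*], and α̂, β̂ are the infinitesimal characters on κ[L*] extending α, β (vanishing on monomials of polynomial degree ≠ 1). -/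

import Mathlib

open scoped BigOperators

variable {κ : Type*} [Field κ] {B : Type*}

/-- The symmetry factor `∏_b (count of b in I)!`: the pairing
`⟨b_I | b_I⟩ = Σ_{σ∈Sₙ} ∏ᵢ ⟨b_{σ(i)}|b_i⟩` of a monomial in the basis `{b_i}` of
`L*` against the corresponding monomial in the dual basis of `L`. -/
noncomputable def symmNatB (I : Multiset B) : ℕ :=
  haveI := Classical.decEq B
  ∏ b ∈ I.toFinset, (I.count b).factorial

/-- Given the structure constants `Λ` of the map `δ̄ = Σ_{n≥1} δₙ : L* → L* ⊗ κ[L*]`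
dual to the brace product (`δ̄(b_i) = Σ_{i₀,I≠∅} λ^{i;i₀}_I b_{i₀} ⊗ b_I`), this is
the coproduct `δ(b) = 1 ⊗ b + b ⊗ 1 + δ̄(b)` of the Hopf algebra `κ[L*]` evaluated
on a basis element `b ∈ L* ⊂ κ[L*]`, written in the monomial coordinates of
`κ[L*] ⊗ κ[L*]` (monomials of `κ[L*]` = multisets over the basis `B`). -/
noncomputable def deltaEltB (Λ : B → ((B × Multiset B) →₀ κ)) (b : B) :
    AddMonoidAlgebra κ (Multiset B × Multiset B) :=
  AddMonoidAlgebra.ofCoeff (Finsupp.single (0, {b}) 1 + Finsupp.single ({b}, 0) 1 +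
    (Λ b).sum fun p c => Finsupp.single ({p.1}, p.2) c)

/-- The coproduct `δ` on a monomial `b_I` of `κ[L*]`, computed using that `δ` is a
morphism of algebras. -/
noncomputable def deltaMonoB (Λ : B → ((B × Multiset B) →₀ κ))
    (I : Multiset B) : AddMonoidAlgebra κ (Multiset B × Multiset B) :=
  (I.map (deltaEltB Λ)).prod

/-- The reduced coproduct `δ̄(x) = δ(x) − 1 ⊗ x − x ⊗ 1` of `κ[L*]` on a monomial. -/
noncomputable def deltaBarMonoB (Λ : B → ((B × Multiset B) →₀ κ))
    (I : Multiset B) : AddMonoidAlgebra κ (Multiset B × Multiset B) :=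
  AddMonoidAlgebra.ofCoeff (id (α := (Multiset B × Multiset B) →₀ κ) (deltaMonoB Λ I).coeff
    - Finsupp.single (0, I) 1 - Finsupp.single (I, 0) 1)

/-- The iterated coproduct `δ^{[m+1]} : κ[L*] → κ[L*]^{⊗(m+1)}` on a monomial;
`δ^{[1]} = Id` and `δ^{[n+1]} = (δ ⊗ Id^{⊗n−1}) ∘ δ^{[n]}`. -/
noncomputable def iterDeltaB (Λ : B → ((B × Multiset B) →₀ κ)) :
    (m : ℕ) → Multiset B → ((Fin (m+1) → Multiset B) →₀ κ)
  | 0, I => Finsupp.single (fun _ => I) 1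
  | (m+1), I => (iterDeltaB Λ m I).sum fun f c =>
      (deltaMonoB Λ (f 0)).coeff.sum fun p d =>
        Finsupp.single (Fin.cons p.1 (Fin.cons p.2 (Fin.tail f))) (c * d)

/-- The iterated reduced coproduct `δ̄^{[m+1]} : κ[L*] → κ[L*]^{⊗(m+1)}` on a
monomial; `δ̄^{[1]} = Id` and `δ̄^{[n+1]} = (δ̄ ⊗ Id^{⊗n−1}) ∘ δ̄^{[n]}`. -/
noncomputable def iterBarB (Λ : B → ((B × Multiset B) →₀ κ)) :
    (m : ℕ) → Multiset B → ((Fin (m+1) → Multiset B) →₀ κ)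
  | 0, I => Finsupp.single (fun _ => I) 1
  | (m+1), I => (iterBarB Λ m I).sum fun f c =>
      (deltaBarMonoB Λ (f 0)).coeff.sum fun p d =>
        Finsupp.single (Fin.cons p.1 (Fin.cons p.2 (Fin.tail f))) (c * d)

/-
The `n = 1` instance of the duality between brace products and `δ̄` says that the structure
constants of `◁` in the basis dual to `B` are the coefficients of `δ_irr = δ₁`; bilinearity of `◁`
then gives the first identity. On a generator `w`, `δ̄(w)` consists of terms `b_{i₀} ⊗ b_I`, and
`α̂ ⊗ β̂` pairs nontrivially only with those having `|I| = 1`, which make up `δ_irr(w)`.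
-/

open Finsupp

section Pairing

variable {R : Type*} [CommSemiring R]

/-- The infinitesimal character `α̂` of `κ[L*]` extending `α ∈ L`, on the monomial `b_I`. -/
def infChar (α : B →₀ R) (I : Multiset B) : R :=
  if Multiset.card I = 1 then (I.map α).sum else 0

@[simp]
theorem infChar_singleton (α : B →₀ R) (b : B) : infChar α {b} = α b := by
  simp [infChar]

theorem ite_card_eq_one_mul_eq_mul_infChar (α : B →₀ R) (I : Multiset B) (x : R) :
    (if Multiset.card I = 1 then x * (I.map α).sum else 0) = x * infChar α I := by
  unfold infChar
  split_ifs <;> simp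

theorem bilinear_apply_eq_sum_single {M : Type*} [AddCommMonoid M] [Module R M]
    (f : (B →₀ R) →ₗ[R] (B →₀ R) →ₗ[R] M) (α β : B →₀ R) :
    f α β = α.sum fun a x => β.sum fun b y => (x * y) • f (single a 1) (single b 1) := by
  rw [← LinearMap.sum_repr_mul_repr_mul Finsupp.basisSingleOne Finsupp.basisSingleOne α β]
  simp [mul_smul]

theorem sum_mul_mul_infChar (F : B × Multiset B →₀ R) (α β : B →₀ R) :
    (F.sum fun p c => c * α p.1 * infChar β p.2)
      = α.sum fun a x => β.sum fun b y => x * y * F (a, {b}) := by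
  classical
  simp only [sum, ← Finset.sum_product']
  symm
  refine Finset.sum_bij_ne_zero (fun q _ _ => (q.1, {q.2})) ?_ ?_ ?_ ?_
  · intro q _ hq
    exact mem_support_iff.mpr fun h => hq (by simp [h])
  · intro q _ _ q' _ _ h
    simp only [Prod.mk.injEq, Multiset.singleton_inj] at h
    exact Prod.ext h.1 h.2
  · rintro ⟨a, I⟩ _ hp
    have hI : Multiset.card I = 1 := by
      by_contra h
      exact hp (by simp [infChar, h])
    obtain ⟨b, rfl⟩ := Multiset.card_eq_one.mp hI
    simp only [infChar_singleton] at hp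
    refine ⟨(a, b), ?_, ?_, rfl⟩
    · simp only [Finset.mem_product, mem_support_iff]
      exact ⟨fun h => hp (by simp [h]), fun h => hp (by simp [h])⟩
    · convert hp using 1
      ring
  · intro q _ _
    simp only [infChar_singleton]
    ring

end Pairing

theorem deltaBarMonoB_singleton_coeff (Λ : B → ((B × Multiset B) →₀ κ)) (w : B) :
    (deltaBarMonoB Λ {w}).coeff = (Λ w).sum fun p c => single ({p.1}, p.2) c := by
  simp only [deltaBarMonoB, deltaMonoB, Multiset.map_singleton, Multiset.prod_singleton,
    deltaEltB, id, AddMonoidAlgebra.coeff_ofCoeff]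
  abel

theorem preLie_single_single_apply (pl : (B →₀ κ) →ₗ[κ] (B →₀ κ) →ₗ[κ] (B →₀ κ))
    (Br : (B →₀ κ) → List (B →₀ κ) → (B →₀ κ)) (hBr1 : ∀ v w, Br v [w] = pl v w)
    (Λ : B → ((B × Multiset B) →₀ κ))
    (hdual₁ : ∀ (a : B) (γ : Fin 1 → B) (w : B),
      (Br (single a 1) (List.ofFn fun i => single (γ i) 1)) w
        = Λ w (a, (↑(List.ofFn γ) : Multiset B)) * symmNatB (↑(List.ofFn γ) : Multiset B))
    (a b w : B) :
    pl (single a 1) (single b 1) w = Λ w (a, {b}) := by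
  simpa [hBr1, symmNatB] using hdual₁ a (fun _ => b) w

theorem preLie_coproduct_duality_general
    (pl : (B →₀ κ) →ₗ[κ] (B →₀ κ) →ₗ[κ] (B →₀ κ))
    (Br : (B →₀ κ) → List (B →₀ κ) → (B →₀ κ))
    (hBr1 : ∀ v w, Br v [w] = pl v w)
    (Λ : B → ((B × Multiset B) →₀ κ))
    (hdual : ∀ (n : ℕ), 1 ≤ n → ∀ (a : B) (γ : Fin n → B) (w : B),
      (Br (Finsupp.single a 1) (List.ofFn fun i => Finsupp.single (γ i) 1)) w
        = Λ w (a, (↑(List.ofFn γ) : Multiset B))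
            * symmNatB (↑(List.ofFn γ) : Multiset B)) :
    ∀ (α β : B →₀ κ) (w : B),
      ((pl α β) w
          = (Λ w).sum fun p c =>
              if Multiset.card p.2 = 1 then c * α p.1 * (p.2.map β).sum else 0)
      ∧
      ((pl α β) w
          = (deltaBarMonoB Λ ({w} : Multiset B)).coeff.sum fun q c =>
              c * (if Multiset.card q.1 = 1 then (q.1.map α).sum else 0)
                * (if Multiset.card q.2 = 1 then (q.2.map β).sum else 0)) := by
  intro α β w
  have hδ₁ := preLie_single_single_apply pl Br hBr1 Λ (hdual 1 le_rfl)
  have hδ_irr : pl α β w = (Λ w).sum fun p c => c * α p.1 * infChar β p.2 := by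
    simp only [bilinear_apply_eq_sum_single pl α β, Finsupp.sum_apply, Finsupp.smul_apply,
      smul_eq_mul, hδ₁, sum_mul_mul_infChar]
  refine ⟨by simpa only [ite_card_eq_one_mul_eq_mul_infChar] using hδ_irr, ?_⟩
  rw [deltaBarMonoB_singleton_coeff, hδ_irr, sum_sum_index (by simp) (by intros; ring)]
  refine sum_congr fun p _ => ?_
  rw [sum_single_index (by simp)]
  show _ = _ * infChar α {p.1} * infChar β p.2
  rw [infChar_singleton]

/-- **Duality between the pre-Lie product and the coproduct** (Lemma 4.2).
Let `(L,◁)` be a connected graded, locally finite dimensional pre-Lie algebra,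
presented by a homogeneous basis: `B` indexes a homogeneous basis of the graded
dual `L*` with degree function `deg` (so `L` is identified with `B →₀ κ` via the
dual basis); `pl = ◁` is the (bilinear, graded) pre-Lie product; `Br` is the
Oudom–Guin symmetric brace operation of `(L,◁)`, and `Λ` records the coordinates
of the maps `δₙ : L* → L* ⊗ κ[L*]ₙ` dual to the brace products, i.e.
`δ̄ = Σ_{n≥1} δₙ` with `δ̄(b_i) = Σ_{i₀,I≠∅} λ^{i;i₀}_I b_{i₀} ⊗ b_I`.
Then for all `α, β ∈ L` and `w ∈ L*`:
`⟨α ◁ β | w⟩ = ⟨α ⊗ β | δ_irr(w)⟩ = ⟨α̂ ⊗ β̂ | δ̄(w)⟩`,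
where `δ_irr = δ₁`, `δ̄(x) = δ(x) − 1⊗x − x⊗1` is the reduced coproduct of
`κ[L*]`, and `α̂, β̂` are the infinitesimal characters on `κ[L*]` extending `α, β`
(vanishing on monomials of polynomial degree `≠ 1`). -/
theorem preLie_coproduct_duality [CharZero κ]
    (deg : B → ℕ) (hdeg : ∀ b, 1 ≤ deg b)
    (hfin : ∀ n, {b : B | deg b = n}.Finite)
    (pl : (B →₀ κ) →ₗ[κ] (B →₀ κ) →ₗ[κ] (B →₀ κ))
    (hpl : ∀ u v w : B →₀ κ,
      pl (pl u v) w - pl u (pl v w) = pl (pl u w) v - pl u (pl w v))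
    (hplgrade : ∀ a b : B,
      ∀ x ∈ (pl (Finsupp.single a 1) (Finsupp.single b 1)).support,
        deg x = deg a + deg b)
    (Br : (B →₀ κ) → List (B →₀ κ) → (B →₀ κ))
    (hBr1 : ∀ v w, Br v [w] = pl v w)
    (hBrrec : ∀ (v : B →₀ κ) (ws : List (B →₀ κ)) (w : B →₀ κ), ws ≠ [] →
      Br v (ws ++ [w]) =
        pl (Br v ws) w -
          ∑ i ∈ Finset.range ws.length, Br v (ws.set i (pl (ws.getD i 0) w)))
    (Λ : B → ((B × Multiset B) →₀ κ))
    (hΛ0 : ∀ (w : B) (p : B × Multiset B), p.2 = 0 → Λ w p = 0)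
    (hdual : ∀ (n : ℕ), 1 ≤ n → ∀ (a : B) (γ : Fin n → B) (w : B),
      (Br (Finsupp.single a 1) (List.ofFn fun i => Finsupp.single (γ i) 1)) w
        = Λ w (a, (↑(List.ofFn γ) : Multiset B))
            * symmNatB (↑(List.ofFn γ) : Multiset B)) :
    ∀ (α β : B →₀ κ) (w : B),
      ((pl α β) w
          = (Λ w).sum fun p c =>
              if Multiset.card p.2 = 1 then c * α p.1 * (p.2.map β).sum else 0)
      ∧
      ((pl α β) w
          = (deltaBarMonoB Λ ({w} : Multiset B)).coeff.sum fun q c =>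
              c * (if Multiset.card q.1 = 1 then (q.1.map α).sum else 0)
                * (if Multiset.card q.2 = 1 then (q.2.map β).sum else 0)) :=
  preLie_coproduct_duality_general pl Br hBr1 Λ hdual
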